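/- arXiv:2002.04660 — 4 statements merged into one kernel-verified Lean document; each statement's English description precedes it below -/
import Mathlib

section
/- Let m, n be integers with gcd(m, n) = 1 and set ω₀ = m + nω. The parametrized line ℓ(t) = 1/2 + t·ω₀ (t ∈ ℝ) contains no point of the lattice Λ_{1,ω} if and only if n is odd. -/
open Complex

/-- `ω = exp(2πi/6)`, the primitive sixth root of unity. -/
noncomputable def ω : ℂ := Complex.exp (2 * Real.pi * Complex.I / 6)

lemma omega_eq : ω = (1/2 : ℝ) + (Real.sqrt 3 / 2 : ℝ) * I := by
  have h1 : (2 * ↑Real.pi * Complex.I / 6 : ℂ) = ((Real.pi/3 : ℝ) : ℂ) * I := by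
    push_cast; ring
  rw [ω, h1, Complex.exp_mul_I, ← Complex.ofReal_cos, ← Complex.ofReal_sin,
    Real.cos_pi_div_three, Real.sin_pi_div_three]

lemma omega_re : ω.re = 1/2 := by rw [omega_eq]; simp
lemma omega_im : ω.im = Real.sqrt 3 / 2 := by rw [omega_eq]; simp

/-- The triangular lattice `Λ_{1,ω}`, the ℤ-span of `{1, ω}` in `ℂ`. -/
def TriLattice : Set ℂ := {z : ℂ | ∃ m n : ℤ, z = (m : ℂ) + (n : ℂ) * ω}

/-- For `gcd(m,n) = 1` and `ω₀ = m + n·ω`, the line `ℓ(t) = 1/2 + t·ω₀` contains no point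
of the lattice `Λ_{1,ω}` if and only if `n` is odd. -/
theorem line_avoids_lattice_iff_odd (m n : ℤ) (h : Int.gcd m n = 1) :
    (¬ ∃ t : ℝ, (1 / 2 + (t : ℂ) * ((m : ℂ) + (n : ℂ) * ω)) ∈ TriLattice) ↔ Odd n := by
  have hs : Real.sqrt 3 / 2 ≠ 0 := by positivity
  constructor
  · -- contrapositive: Even n → ∃
    intro hno
    by_contra hodd
    rw [Int.not_odd_iff_even] at hodd
    obtain ⟨k, hk⟩ := hodd
    apply hno
    have hbezout : m * Int.gcdA m n + n * Int.gcdB m n = 1 := by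
      rw [← Int.gcd_eq_gcd_ab m n, h]; norm_num
    set u := Int.gcdA m n with hu
    set v := Int.gcdB m n with hv
    subst hk
    refine ⟨(u : ℝ)/2, 1 - v*k, u*k, ?_⟩
    have hmc : (m : ℂ) * u + (k + k) * v = 1 := by exact_mod_cast hbezout
    push_cast
    rw [omega_eq]
    push_cast
    linear_combination (1/2) * hmc
  · -- Odd n → no lattice point
    rintro ⟨j, hj⟩ ⟨t, a, b, heq⟩
    rw [omega_eq] at heq
    have him := congrArg Complex.im heq
    have hre := congrArg Complex.re heq
    simp [Complex.add_im, Complex.add_re, Complex.mul_im, Complex.mul_re] at him hre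
    have htn : t * n = b := by
      have := mul_right_cancel₀ hs (by linarith [him] : t * n * (Real.sqrt 3/2) = b * (Real.sqrt 3/2))
      exact this
    have key : (n : ℝ) = 2*(a*n) - 2*(b*m) := by
      linear_combination 2*(n:ℝ)*hre - (2*(m:ℝ)+(n:ℝ))*htn
    have : n = 2*(a*n) - 2*(b*m) := by exact_mod_cast key
    omega
end

section
/- Let τ, τ' ∈ ℂ both have positive imaginary part. Then there exists a nonzero λ ∈ ℂ with λ·Λ_{1,τ'} ⊆ Λ_{1,τ} (i.e., λ·z ∈ Λ_{1,τ} for every z ∈ Λ_{1,τ'}) if and only if there exist rational numbers a, b, c, d with ad − bc ≠ 0 such that τ' = (aτ + b)/(cτ + d). (This is the lattice-theoretic form of the statement that the elliptic curve X_{τ'} is a holomorphic covering of X_τ if and only if τ' = γ(τ) for some γ ∈ PSL(2, ℚ).) -/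
open Complex

/-- The lattice `Λ_{1,τ} = {m + nτ : m, n ∈ ℤ}`, the ℤ-span of `{1, τ}` in `ℂ`. -/
def Lam (τ : ℂ) : Set ℂ := {z : ℂ | ∃ m n : ℤ, z = (m : ℂ) + (n : ℂ) * τ}

lemma exists_int_mul (r : ℚ) (k : ℤ) : ∃ A : ℤ, (A : ℚ) = r * ((r.den : ℚ) * k) := by
  refine ⟨r.num * k, ?_⟩
  have hd : (r.den : ℚ) ≠ 0 := by exact_mod_cast r.den_nz
  have key : r * (r.den : ℚ) = r.num := by
    have h2 := Rat.num_div_den r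
    rw [div_eq_iff hd] at h2
    exact h2.symm
  push_cast
  linear_combination (-(k : ℚ)) * key

/-- For `τ, τ'` in the upper half-plane, there is a nonzero `λ ∈ ℂ` with
`λ·Λ_{1,τ'} ⊆ Λ_{1,τ}` iff `τ' = (aτ + b)/(cτ + d)` for some rationals `a, b, c, d` with
`ad − bc ≠ 0` (i.e. `X_{τ'}` covers `X_τ` iff `τ' = γ(τ)` for some `γ ∈ PSL(2, ℚ)`). -/
theorem covering_iff_pslq_orbit (τ τ' : ℂ) (hτ : 0 < τ.im) (hτ' : 0 < τ'.im) :
    (∃ l : ℂ, l ≠ 0 ∧ ∀ z ∈ Lam τ', l * z ∈ Lam τ) ↔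
    (∃ a b c d : ℚ, a * d - b * c ≠ 0 ∧
      τ' = ((a : ℂ) * τ + (b : ℂ)) / ((c : ℂ) * τ + (d : ℂ))) := by
  constructor
  · rintro ⟨l, hl0, hl⟩
    obtain ⟨m, n, hmn⟩ := hl 1 ⟨1, 0, by simp⟩
    obtain ⟨p, q, hpq⟩ := hl τ' ⟨0, 1, by simp⟩
    rw [mul_one] at hmn
    have hden : (n : ℂ) * τ + m ≠ 0 := by
      rw [add_comm, ← hmn]; exact hl0
    have hτ'eq : τ' = ((q : ℂ) * τ + p) / ((n : ℂ) * τ + m) := by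
      rw [eq_div_iff hden]
      rw [hmn] at hpq
      linear_combination hpq
    refine ⟨q, p, n, m, ?_, by exact_mod_cast hτ'eq⟩
    intro hz
    have hz' : (q : ℝ) * m - p * n = 0 := by exact_mod_cast hz
    have him : τ'.im = 0 := by
      rw [hτ'eq, Complex.div_im]
      have key : (((q : ℂ) * τ + p).im * ((n : ℂ) * τ + m).re
          - ((q : ℂ) * τ + p).re * ((n : ℂ) * τ + m).im) = 0 := by
        simp only [Complex.add_im, Complex.add_re, Complex.mul_im, Complex.mul_re,
          Complex.intCast_re, Complex.intCast_im]
        ring_nf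
        nlinarith [hz']
      rw [div_sub_div_same, key, zero_div]
    linarith [hτ']
  · rintro ⟨a, b, c, d, hdet, heq⟩
    have hden : (c : ℂ) * τ + d ≠ 0 := by
      by_cases hc : c = 0
      · subst hc
        have hd : d ≠ 0 := by
          intro h; apply hdet; rw [h]; ring
        simpa using fun h => hd (by exact_mod_cast h)
      · intro h
        have := congrArg Complex.im h
        simp [Complex.add_im, Complex.mul_im] at this
        rcases this with h1 | h1
        · exact hc (by exact_mod_cast h1)
        · linarith
    obtain ⟨A, hA⟩ := exists_int_mul a (b.den * c.den * d.den)
    obtain ⟨B, hB⟩ := exists_int_mul b (a.den * c.den * d.den)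
    obtain ⟨C, hC⟩ := exists_int_mul c (a.den * b.den * d.den)
    obtain ⟨D, hD⟩ := exists_int_mul d (a.den * b.den * c.den)
    set N : ℚ := (a.den : ℚ) * b.den * c.den * d.den with hN
    have hA' : (A : ℚ) = a * N := by rw [hA, hN]; push_cast; ring
    have hB' : (B : ℚ) = b * N := by rw [hB, hN]; push_cast; ring
    have hC' : (C : ℚ) = c * N := by rw [hC, hN]; push_cast; ring
    have hD' : (D : ℚ) = d * N := by rw [hD, hN]; push_cast; ring
    have hAc : (A : ℂ) = (a : ℂ) * N := by exact_mod_cast hA'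
    have hBc : (B : ℂ) = (b : ℂ) * N := by exact_mod_cast hB'
    have hCc : (C : ℂ) = (c : ℂ) * N := by exact_mod_cast hC'
    have hDc : (D : ℂ) = (d : ℂ) * N := by exact_mod_cast hD'
    have hN0 : (N : ℂ) ≠ 0 := by
      have : N ≠ 0 := by
        rw [hN]
        positivity
      exact_mod_cast this
    refine ⟨(N : ℂ) * ((c : ℂ) * τ + d), mul_ne_zero hN0 hden, ?_⟩
    rintro z ⟨m, n, rfl⟩
    refine ⟨m * D + n * B, m * C + n * A, ?_⟩
    push_cast
    rw [hAc, hBc, hCc, hDc, heq]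
    field_simp
    ring
end

section
/- Let τ, τ' ∈ ℂ both have positive imaginary part. Then there exists a nonzero λ ∈ ℂ with λ·Λ_{1,τ'} ⊆ Λ_{1,τ} if and only if there exists a nonzero μ ∈ ℂ with μ·Λ_{1,τ} ⊆ Λ_{1,τ'}. (This is the lattice-theoretic form of the statement that X_{τ'} is a holomorphic covering of X_τ if and only if X_τ is a holomorphic covering of X_{τ'}.) -/
open Complex

lemma covering_aux (τ τ' : ℂ) (hτ' : 0 < τ'.im)
    (h : ∃ l : ℂ, l ≠ 0 ∧ ∀ z ∈ Lam τ', l * z ∈ Lam τ) :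
    ∃ μ : ℂ, μ ≠ 0 ∧ ∀ z ∈ Lam τ, μ * z ∈ Lam τ' := by
  obtain ⟨l, hl, hmap⟩ := h
  obtain ⟨a, b, hab⟩ := hmap 1 ⟨1, 0, by norm_num⟩
  obtain ⟨c, d, hcd⟩ := hmap τ' ⟨0, 1, by norm_num⟩
  rw [mul_one] at hab
  have him : τ'.im ≠ 0 := ne_of_gt hτ'
  have hΔZ : a * d - b * c ≠ 0 := by
    intro h0
    have hC : (a : ℂ) * d = (b : ℂ) * c := by exact_mod_cast sub_eq_zero.mp h0
    have h1 : (a : ℂ) * τ' = c := by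
      have key : l * ((a : ℂ) * τ' - (c : ℂ)) = ((a : ℂ) * d - (b : ℂ) * c) * τ := by
        linear_combination (a : ℂ) * hcd - (c : ℂ) * hab
      rw [sub_eq_zero.mpr hC, zero_mul] at key
      exact sub_eq_zero.mp ((mul_eq_zero.mp key).resolve_left hl)
    have h2 : (b : ℂ) * τ' = d := by
      have key : l * ((b : ℂ) * τ' - (d : ℂ)) = ((b : ℂ) * c - (a : ℂ) * d) * 1 := by
        linear_combination (b : ℂ) * hcd - (d : ℂ) * hab
      rw [hC, sub_self, zero_mul] at key
      exact sub_eq_zero.mp ((mul_eq_zero.mp key).resolve_left hl)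
    have h1' := congrArg Complex.im h1
    have h2' := congrArg Complex.im h2
    simp [Complex.mul_im] at h1' h2'
    have ha : a = 0 := h1'.resolve_right him
    have hb : b = 0 := h2'.resolve_right him
    exact hl (by rw [hab, ha, hb]; simp)
  have hΔ : ((a : ℂ) * d - (b : ℂ) * c) ≠ 0 := by
    intro h0
    exact hΔZ (by exact_mod_cast h0)
  refine ⟨((a : ℂ) * d - (b : ℂ) * c) / l, div_ne_zero hΔ hl, ?_⟩
  rintro z ⟨m, n, rfl⟩
  refine ⟨m * d - n * c, n * a - m * b, ?_⟩
  rw [div_mul_eq_mul_div, div_eq_iff hl]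
  push_cast
  linear_combination (-((m : ℂ) * d - (n : ℂ) * c)) * hab + (-((n : ℂ) * a - (m : ℂ) * b)) * hcd

/-- For `τ, τ'` in the upper half-plane, there is a nonzero `λ ∈ ℂ` with
`λ·Λ_{1,τ'} ⊆ Λ_{1,τ}` iff there is a nonzero `μ ∈ ℂ` with `μ·Λ_{1,τ} ⊆ Λ_{1,τ'}`
(i.e. `X_{τ'}` covers `X_τ` iff `X_τ` covers `X_{τ'}`). -/
theorem covering_symm (τ τ' : ℂ) (hτ : 0 < τ.im) (hτ' : 0 < τ'.im) :
    (∃ l : ℂ, l ≠ 0 ∧ ∀ z ∈ Lam τ', l * z ∈ Lam τ) ↔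
    (∃ μ : ℂ, μ ≠ 0 ∧ ∀ z ∈ Lam τ, μ * z ∈ Lam τ') := by
  exact ⟨covering_aux τ τ' hτ', covering_aux τ' τ hτ⟩
end

section
/- For every λ ∈ ℂ with λ ≠ 0 and λ ≠ 1, if the derivative of the j-invariant vanishes at λ, then j(λ) = 0 or j(λ) = 1 (i.e., all critical values of j on ℂ \ {0, 1} lie in {0, 1}, so j is a Belyi function). -/
/-!
The derivative factors as `j'(λ) = (4/27)·(λ² − λ + 1)²·(2λ − 1)(λ − 2)(λ + 1) / (λ³(λ − 1)³)`,
and `j(λ) − 1 = ((2λ − 1)(λ − 2)(λ + 1))² / (27 λ²(λ − 1)²)`. So a critical point is either a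
root of `λ² − λ + 1`, where `j` vanishes, or a root of `(2λ − 1)(λ − 2)(λ + 1)`, where `j = 1`.
-/

/-- The `j`-invariant `j(λ) = (4/27)·(λ² − λ + 1)³ / (λ²(λ − 1)²)`. -/
noncomputable def jInv : ℂ → ℂ :=
  fun z => (4 / 27) * (z ^ 2 - z + 1) ^ 3 / (z ^ 2 * (z - 1) ^ 2)

theorem hasDerivAt_jInv {z : ℂ} (h0 : z ≠ 0) (h1 : z ≠ 1) :
    HasDerivAt jInv
      (4 / 27 * (z ^ 2 - z + 1) ^ 2 * ((2 * z - 1) * (z - 2) * (z + 1)) / (z ^ 3 * (z - 1) ^ 3))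
      z := by
  have h1' : z - 1 ≠ 0 := sub_ne_zero.mpr h1
  have hnum : HasDerivAt (fun z : ℂ => 4 / 27 * (z ^ 2 - z + 1) ^ 3)
      (4 / 27 * (3 * (z ^ 2 - z + 1) ^ 2 * (2 * z - 1))) z := by
    have := ((((hasDerivAt_id z).pow 2).sub (hasDerivAt_id z)).add_const 1).pow 3
    simpa using this.const_mul (4 / 27 : ℂ)
  have hden : HasDerivAt (fun z : ℂ => z ^ 2 * (z - 1) ^ 2)
      (2 * z * (z - 1) ^ 2 + z ^ 2 * (2 * (z - 1))) z := by
    simpa using ((hasDerivAt_id z).fun_pow 2).fun_mul (((hasDerivAt_id z).sub_const 1).fun_pow 2)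
  refine (hnum.fun_div hden (by positivity)).congr_deriv ?_
  field_simp
  ring

theorem jInv_sub_one {z : ℂ} (h0 : z ≠ 0) (h1 : z ≠ 1) :
    jInv z - 1 = ((2 * z - 1) * (z - 2) * (z + 1)) ^ 2 / (27 * z ^ 2 * (z - 1) ^ 2) := by
  have h1' : z - 1 ≠ 0 := sub_ne_zero.mpr h1
  simp only [jInv]
  field_simp
  ring

/-- All critical values of the `j`-invariant on `ℂ \ {0, 1}` lie in `{0, 1}`:
if `λ ≠ 0`, `λ ≠ 1` and `j'(λ) = 0`, then `j(λ) = 0` or `j(λ) = 1`.  Thus `j` is a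
Belyi function. -/
theorem jInv_belyi (z : ℂ) (h0 : z ≠ 0) (h1 : z ≠ 1) (hc : deriv jInv z = 0) :
    jInv z = 0 ∨ jInv z = 1 := by
  rw [(hasDerivAt_jInv h0 h1).deriv] at hc
  have hcrit : (z ^ 2 - z + 1) ^ 2 * ((2 * z - 1) * (z - 2) * (z + 1)) = 0 := by
    simpa [h0, sub_ne_zero.mpr h1] using hc
  rcases mul_eq_zero.mp hcrit with hq | hp
  · left
    simp [jInv, pow_eq_zero_iff two_ne_zero |>.mp hq]
  · right
    rw [← sub_eq_zero, jInv_sub_one h0 h1, hp]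
    simp
end
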